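/- Define x_n = (1/n, 1/n², 0) and y_n = (1/n, 1/n², 1/n) in ℝ³ for n ∈ ℕ, n ≥ 1. Then none of the points x_n, y_n lies in the closed convex hull of the remaining points {x_j, y_j : j ≠ n} ∪ ({x_n, y_n} minus the given point). Moreover, for each n the four points x_n, y_n, x_{n+1}, y_{n+1} lie in a common plane H_n, and all points x_j, y_j with j ∉ {n, n+1} lie in the open halfspace bounded by H_n containing the origin. -/

import Mathlib

noncomputable section

/-- The point `x_n = (1/n, 1/n², 0)`. -/
def ptx (n : ℕ) : EuclideanSpace ℝ (Fin 3) :=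
  WithLp.toLp 2 ![1 / (n : ℝ), 1 / (n : ℝ) ^ 2, 0]

/-- The point `y_n = (1/n, 1/n², 1/n)`. -/
def pty (n : ℕ) : EuclideanSpace ℝ (Fin 3) :=
  WithLp.toLp 2 ![1 / (n : ℝ), 1 / (n : ℝ) ^ 2, 1 / (n : ℝ)]

/-- All points `x_j, y_j`, `j ≥ 1`. -/
def allPts : Set (EuclideanSpace ℝ (Fin 3)) :=
  ⋃ j ∈ {j : ℕ | 1 ≤ j}, {ptx j, pty j}

/-! All points lie over the parabola `(s, s², ·)` with `s = 1/j`, so a functional `(a, -1, w)`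
restricted to them is a concave quadratic in `s` plus `w` times the height. Each `x_n`, `y_n` is
cut off by a tangent plane of the parabola at `s = 1/n`, tilted in the height direction, and `H_n`
is the plane through the chord over `[1/(n+1), 1/n]`; the margins come from the gap
`|1/j - 1/n| ≥ 1/(n(n+1))` between distinct reciprocals. -/

theorem notMem_closure_convexHull_of_inner_le {E : Type*} [NormedAddCommGroup E]
    [InnerProductSpace ℝ E] {S : Set E} {p u : E} {c : ℝ}
    (hS : ∀ q ∈ S, inner ℝ u q ≤ c) (hp : c < inner ℝ u p) :
    p ∉ closure (convexHull ℝ S) := by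
  have hconvex : Convex ℝ {q : E | inner ℝ u q ≤ c} :=
    convex_halfSpace_le ⟨inner_add_right u, fun r x => real_inner_smul_right u x r⟩ c
  have hclosed : IsClosed {q : E | inner ℝ u q ≤ c} :=
    isClosed_le (continuous_const.inner continuous_id) continuous_const
  exact fun h => not_le.2 hp (closure_minimal (convexHull_min hS hconvex) hclosed h)

theorem inner_toLp_three (a b c d e f : ℝ) :
    inner ℝ !₂[a, b, c] !₂[d, e, f] = a * d + b * e + c * f := by
  simp [PiLp.inner_apply, Fin.sum_univ_three]
  ring

theorem inner_tangent_parabola (t w s z : ℝ) :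
    inner ℝ !₂[2 * t, -1, w] !₂[s, s ^ 2, z] = t ^ 2 - (s - t) ^ 2 + w * z := by
  rw [inner_toLp_three]
  ring

theorem inner_chord_parabola (a b s z : ℝ) :
    inner ℝ !₂[a + b, -1, 0] !₂[s, s ^ 2, z] = a * b - (s - a) * (s - b) := by
  rw [inner_toLp_three]
  ring

theorem ptx_eq (j : ℕ) : ptx j = !₂[1 / (j : ℝ), (1 / (j : ℝ)) ^ 2, 0] := by
  rw [one_div_pow]
  rfl

theorem pty_eq (j : ℕ) : pty j = !₂[1 / (j : ℝ), (1 / (j : ℝ)) ^ 2, 1 / (j : ℝ)] := by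
  rw [one_div_pow]
  rfl

theorem forall_mem_allPts_diff {P : EuclideanSpace ℝ (Fin 3) → Prop}
    {p : EuclideanSpace ℝ (Fin 3)} (hx : ∀ j : ℕ, 1 ≤ j → ptx j ≠ p → P (ptx j))
    (hy : ∀ j : ℕ, 1 ≤ j → pty j ≠ p → P (pty j)) :
    ∀ q ∈ allPts \ {p}, P q := by
  rintro q ⟨hq, hqp⟩
  simp only [allPts, Set.mem_iUnion, Set.mem_ofPred_eq, Set.mem_insert_iff,
    Set.mem_singleton_iff] at hq
  obtain ⟨j, hj, rfl | rfl⟩ := hq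
  exacts [hx j hj hqp, hy j hj hqp]

theorem one_div_mul_succ_le_one_div_sub_one_div {m k : ℕ} (hm : 1 ≤ m) (hmk : m < k) :
    1 / ((m : ℝ) * (m + 1)) ≤ 1 / (m : ℝ) - 1 / k := by
  have hm' : (1 : ℝ) ≤ m := by exact_mod_cast hm
  have hmk' : (m : ℝ) + 1 ≤ k := by exact_mod_cast hmk
  calc 1 / ((m : ℝ) * (m + 1)) = 1 / (m : ℝ) - 1 / (m + 1) := by field_simp; ring
    _ ≤ 1 / (m : ℝ) - 1 / k := by gcongr

theorem one_div_mul_succ_le_abs_one_div_sub {j n : ℕ} (hj : 1 ≤ j) (hn : 1 ≤ n) (hjn : j ≠ n) :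
    1 / ((n : ℝ) * (n + 1)) ≤ |1 / (j : ℝ) - 1 / n| := by
  rcases hjn.lt_or_gt with h | h
  · calc 1 / ((n : ℝ) * (n + 1)) ≤ 1 / ((j : ℝ) * (j + 1)) := by gcongr
      _ ≤ 1 / (j : ℝ) - 1 / n := one_div_mul_succ_le_one_div_sub_one_div hj h
      _ ≤ |1 / (j : ℝ) - 1 / n| := le_abs_self _
  · calc 1 / ((n : ℝ) * (n + 1)) ≤ 1 / (n : ℝ) - 1 / j :=
          one_div_mul_succ_le_one_div_sub_one_div hn h
      _ ≤ |1 / (j : ℝ) - 1 / n| := by rw [abs_sub_comm]; exact le_abs_self _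

theorem ptx_notMem_closure_convexHull {n : ℕ} (hn : 1 ≤ n) :
    ptx n ∉ closure (convexHull ℝ (allPts \ {ptx n})) := by
  have hn' : (1 : ℝ) ≤ n := by exact_mod_cast hn
  set t : ℝ := 1 / (n : ℝ) with ht
  set δ : ℝ := 1 / ((n : ℝ) * (n + 1))
  have hδ : 0 < δ := by positivity
  have hδt : δ ≤ t := one_div_le_one_div_of_le (by positivity) (by nlinarith)
  have ht1 : t ≤ 1 := by rw [ht, div_le_one (by positivity)]; exact hn'
  refine notMem_closure_convexHull_of_inner_le (u := !₂[2 * t, -1, -1]) (c := t ^ 2 - δ ^ 2)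
    (forall_mem_allPts_diff (fun j hj hjn => ?_) (fun j hj _ => ?_)) ?_
  · have hgap := one_div_mul_succ_le_abs_one_div_sub hj hn (by rintro rfl; exact hjn rfl)
    rw [ptx_eq, inner_tangent_parabola]
    nlinarith [sq_abs (1 / (j : ℝ) - t)]
  · rw [pty_eq, inner_tangent_parabola]
    rcases eq_or_ne j n with rfl | hjn
    · nlinarith
    · have hgap := one_div_mul_succ_le_abs_one_div_sub hj hn hjn
      have hj0 : (0 : ℝ) < 1 / j := by positivity
      nlinarith [sq_abs (1 / (j : ℝ) - t)]
  · rw [ptx_eq, inner_tangent_parabola]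
    nlinarith

theorem pty_notMem_closure_convexHull {n : ℕ} (hn : 1 ≤ n) :
    pty n ∉ closure (convexHull ℝ (allPts \ {pty n})) := by
  have hn' : (1 : ℝ) ≤ n := by exact_mod_cast hn
  set t : ℝ := 1 / (n : ℝ)
  set δ : ℝ := 1 / ((n : ℝ) * (n + 1))
  have hδ : 0 < δ := by positivity
  have hδt : δ ≤ t := one_div_le_one_div_of_le (by positivity) (by nlinarith)
  refine notMem_closure_convexHull_of_inner_le (u := !₂[2 * t, -1, δ / 2])
    (c := t ^ 2 + δ / 2 * t - δ ^ 2 / 2)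
    (forall_mem_allPts_diff (fun j hj _ => ?_) (fun j hj hjn => ?_)) ?_
  · rw [ptx_eq, inner_tangent_parabola]
    nlinarith [sq_nonneg (1 / (j : ℝ) - t)]
  · have hgap := one_div_mul_succ_le_abs_one_div_sub hj hn (by rintro rfl; exact hjn rfl)
    rw [pty_eq, inner_tangent_parabola]
    have key : 0 ≤ (1 / (j : ℝ) - t - δ) * (1 / (j : ℝ) - t + δ / 2) := by
      rcases le_abs'.1 hgap with h | h
      · exact mul_nonneg_of_nonpos_of_nonpos (by linarith) (by linarith)
      · exact mul_nonneg (by linarith) (by linarith)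
    nlinarith
  · rw [pty_eq, inner_tangent_parabola]
    nlinarith

theorem exists_plane_through_ptx_pty_succ {n : ℕ} (hn : 1 ≤ n) :
    ∃ (u : EuclideanSpace ℝ (Fin 3)) (c : ℝ), u ≠ 0 ∧
      inner ℝ u (ptx n) = c ∧ inner ℝ u (pty n) = c ∧
      inner ℝ u (ptx (n + 1)) = c ∧ inner ℝ u (pty (n + 1)) = c ∧
      0 < c ∧
      ∀ j : ℕ, 1 ≤ j → j ≠ n → j ≠ n + 1 →
        inner ℝ u (ptx j) < c ∧ inner ℝ u (pty j) < c := by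
  set a : ℝ := 1 / (n : ℝ)
  set b : ℝ := 1 / ((n + 1 : ℕ) : ℝ)
  have hb : 0 < b := by positivity
  have hba : b < a := one_div_lt_one_div_of_lt (by positivity) (by exact_mod_cast n.lt_succ_self)
  have houtside : ∀ j : ℕ, 1 ≤ j → j ≠ n → j ≠ n + 1 → 0 < (1 / (j : ℝ) - a) * (1 / j - b) := by
    intro j hj hjn hjn'
    rcases (show j < n ∨ n + 1 < j by omega) with h | h
    · have haj : a < 1 / j := one_div_lt_one_div_of_lt (by positivity) (by exact_mod_cast h)
      exact mul_pos (by linarith) (by linarith)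
    · have hjb : 1 / (j : ℝ) < b := one_div_lt_one_div_of_lt (by positivity) (by exact_mod_cast h)
      exact mul_pos_of_neg_of_neg (by linarith) (by linarith)
  refine ⟨!₂[a + b, -1, 0], a * b, ?_, ?_, ?_, ?_, ?_, by positivity, fun j hj hjn hjn' => ?_⟩
  · simp
  all_goals simp only [ptx_eq, pty_eq, inner_chord_parabola]
  · simp [a]
  · simp [a]
  · simp [b]
  · simp [b]
  · have := houtside j hj hjn hjn'
    constructor <;> linarith

theorem zigzag_points_properties :
    (∀ n : ℕ, 1 ≤ n →
      ptx n ∉ closure (convexHull ℝ (allPts \ {ptx n})) ∧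
      pty n ∉ closure (convexHull ℝ (allPts \ {pty n}))) ∧
    (∀ n : ℕ, 1 ≤ n → ∃ (u : EuclideanSpace ℝ (Fin 3)) (c : ℝ), u ≠ 0 ∧
      (inner ℝ u (ptx n) : ℝ) = c ∧ (inner ℝ u (pty n) : ℝ) = c ∧
      (inner ℝ u (ptx (n + 1)) : ℝ) = c ∧ (inner ℝ u (pty (n + 1)) : ℝ) = c ∧
      0 < c ∧
      ∀ j : ℕ, 1 ≤ j → j ≠ n → j ≠ n + 1 →
        (inner ℝ u (ptx j) : ℝ) < c ∧ (inner ℝ u (pty j) : ℝ) < c) :=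
  ⟨fun _ hn => ⟨ptx_notMem_closure_convexHull hn, pty_notMem_closure_convexHull hn⟩,
    fun _ hn => exists_plane_through_ptx_pty_succ hn⟩
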